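/- For the Borwein cubic theta functions and 0 < q < 1, one has 3 a(q³) = a(q) + 2 b(q). -/
import Mathlib


/-- Borwein cubic theta function `a(q) = ∑_{m,n ∈ ℤ} q^(m²+mn+n²)`. -/
noncomputable def borweinA (q : ℝ) : ℝ :=
  ∑' p : ℤ × ℤ, q ^ ((p.1 : ℝ) ^ 2 + (p.1 : ℝ) * (p.2 : ℝ) + (p.2 : ℝ) ^ 2)

/-- Borwein cubic theta function `b(q) = ∑_{m,n ∈ ℤ} ζ^(n-m) q^(m²+mn+n²)`, `ζ = e^{2πi/3}`;
the sum is real and equals the sum of the real parts `cos(2π(n-m)/3)`. -/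
noncomputable def borweinB (q : ℝ) : ℝ :=
  ∑' p : ℤ × ℤ, Real.cos (2 * Real.pi * ((p.2 : ℝ) - (p.1 : ℝ)) / 3) *
    q ^ ((p.1 : ℝ) ^ 2 + (p.1 : ℝ) * (p.2 : ℝ) + (p.2 : ℝ) ^ 2)

/-- Borwein cubic theta function `c(q) = ∑_{m,n ∈ ℤ} q^((m+1/3)²+(m+1/3)(n+1/3)+(n+1/3)²)`. -/
noncomputable def borweinC (q : ℝ) : ℝ :=
  ∑' p : ℤ × ℤ, q ^ (((p.1 : ℝ) + 1 / 3) ^ 2 + ((p.1 : ℝ) + 1 / 3) * ((p.2 : ℝ) + 1 / 3) +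
    ((p.2 : ℝ) + 1 / 3) ^ 2)

open Real

private lemma borwein_summable_aux {q : ℝ} (hq0 : 0 < q) (hq1 : q < 1) :
    Summable (fun m : ℤ => q ^ ((m:ℝ)^2 / 2)) := by
  have hr0 : (0:ℝ) < q ^ ((1:ℝ)/2) := Real.rpow_pos_of_pos hq0 _
  have hr1 : q ^ ((1:ℝ)/2) < 1 := Real.rpow_lt_one hq0.le hq1 (by norm_num)
  have hgeo : Summable (fun n : ℕ => (q ^ ((1:ℝ)/2)) ^ n) :=
    summable_geometric_of_lt_one hr0.le hr1
  have hs : Summable (fun m : ℤ => (q ^ ((1:ℝ)/2)) ^ m.natAbs) := by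
    apply Summable.of_nat_of_neg <;> simpa using hgeo
  apply hs.of_nonneg_of_le (fun m => (Real.rpow_pos_of_pos hq0 _).le)
  intro m
  have h1 : (q ^ ((1:ℝ)/2)) ^ m.natAbs = q ^ ((m.natAbs : ℝ) / 2) := by
    rw [← Real.rpow_natCast (q ^ ((1:ℝ)/2)), ← Real.rpow_mul hq0.le]
    ring_nf
  rw [h1]
  apply Real.rpow_le_rpow_of_exponent_ge hq0 hq1.le
  have : (m.natAbs : ℝ) ≤ ((m.natAbs : ℝ))^2 := by
    have := Nat.le_self_pow (two_ne_zero) m.natAbs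
    exact_mod_cast this
  have h2 : ((m.natAbs : ℝ))^2 = (m:ℝ)^2 := by
    rw [Nat.cast_natAbs]; push_cast; rw [sq_abs]
  linarith [h2 ▸ this]

private lemma borwein_summable {q : ℝ} (hq0 : 0 < q) (hq1 : q < 1) :
    Summable (fun p : ℤ × ℤ => q ^ ((p.1 : ℝ) ^ 2 + (p.1 : ℝ) * (p.2 : ℝ) + (p.2 : ℝ) ^ 2)) := by
  have hg := borwein_summable_aux hq0 hq1
  have hprod := hg.mul_of_nonneg hg (fun m => (Real.rpow_pos_of_pos hq0 _).le)
    (fun m => (Real.rpow_pos_of_pos hq0 _).le)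
  apply hprod.of_nonneg_of_le (fun p => (Real.rpow_pos_of_pos hq0 _).le)
  intro p
  rw [← Real.rpow_add hq0]
  apply Real.rpow_le_rpow_of_exponent_ge hq0 hq1.le
  nlinarith [sq_nonneg ((p.1:ℝ) + (p.2:ℝ))]

private lemma borwein_cos_val (k : ℤ) :
    Real.cos (2 * π * (k:ℝ) / 3) = if (3:ℤ) ∣ k then 1 else -(1/2) := by
  have hk := Int.mul_ediv_add_emod k 3
  have hr : k % 3 = 0 ∨ k % 3 = 1 ∨ k % 3 = 2 := by omega
  set j := k / 3 with hj
  rcases hr with h | h | h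
  · rw [if_pos (by omega)]
    have : 2 * π * (k:ℝ) / 3 = (j:ℝ) * (2*π) := by
      have : (k:ℝ) = 3*(j:ℝ) := by exact_mod_cast (by omega : k = 3*j)
      rw [this]; ring
    rw [this, Real.cos_int_mul_two_pi]
  · rw [if_neg (by omega)]
    have : 2 * π * (k:ℝ) / 3 = 2*π/3 + (j:ℝ) * (2*π) := by
      have : (k:ℝ) = 3*(j:ℝ)+1 := by exact_mod_cast (by omega : k = 3*j+1)
      rw [this]; ring
    rw [this, Real.cos_add_int_mul_two_pi]
    have : 2*π/3 = π - π/3 := by ring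
    rw [this, Real.cos_pi_sub, Real.cos_pi_div_three]
  · rw [if_neg (by omega)]
    have : 2 * π * (k:ℝ) / 3 = -(2*π/3) + ((j+1:ℤ):ℝ) * (2*π) := by
      have : (k:ℝ) = 3*(j:ℝ)+2 := by exact_mod_cast (by omega : k = 3*j+2)
      rw [this]; push_cast; ring
    rw [this, Real.cos_add_int_mul_two_pi, Real.cos_neg]
    have : 2*π/3 = π - π/3 := by ring
    rw [this, Real.cos_pi_sub, Real.cos_pi_div_three]

private def borweinS3 : Set (ℤ × ℤ) := {p | (3:ℤ) ∣ p.2 - p.1}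

private def borweinEquivS3 : (ℤ × ℤ) ≃ borweinS3 where
  toFun p := ⟨(p.1 - p.2, p.1 + 2*p.2), ⟨p.2, by ring⟩⟩
  invFun s := (s.1.1 + (s.1.2 - s.1.1)/3, (s.1.2 - s.1.1)/3)
  left_inv p := by
    obtain ⟨u, v⟩ := p
    simp only
    rw [Prod.mk.injEq]; constructor <;> omega
  right_inv s := by
    obtain ⟨⟨m, n⟩, h⟩ := s
    have h' : (3:ℤ) ∣ n - m := h
    apply Subtype.ext
    simp only
    rw [Prod.mk.injEq]; constructor <;> omega

theorem borwein_arith (q : ℝ) (hq0 : 0 < q) (hq1 : q < 1) :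
    3 * borweinA (q ^ 3) = borweinA q + 2 * borweinB q := by
  set f : ℤ × ℤ → ℝ :=
    fun p => q ^ ((p.1 : ℝ) ^ 2 + (p.1 : ℝ) * (p.2 : ℝ) + (p.2 : ℝ) ^ 2) with hfdef
  have hf : Summable f := borwein_summable hq0 hq1
  have hfpos : ∀ p, 0 < f p := fun p => Real.rpow_pos_of_pos hq0 _
  have hfc : Summable (fun p : ℤ × ℤ =>
      Real.cos (2 * π * ((p.2 : ℝ) - (p.1 : ℝ)) / 3) * f p) := by
    apply hf.of_norm_bounded
    intro p
    rw [norm_mul, Real.norm_eq_abs, Real.norm_eq_abs, abs_of_pos (hfpos p)]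
    calc |Real.cos (2 * π * ((p.2 : ℝ) - (p.1 : ℝ)) / 3)| * f p
        ≤ 1 * f p := by
          apply mul_le_mul_of_nonneg_right (Real.abs_cos_le_one _) (hfpos p).le
      _ = f p := one_mul _
  -- LHS
  have hL : borweinA (q ^ 3) = ∑' s : borweinS3, f s := by
    rw [← borweinEquivS3.tsum_eq (fun s : borweinS3 => f (s : ℤ × ℤ))]
    unfold borweinA
    congr 1
    funext p
    show (q ^ 3 : ℝ) ^ _ = f _
    rw [← Real.rpow_natCast q 3, ← Real.rpow_mul hq0.le, hfdef]
    simp only [borweinEquivS3, Equiv.coe_fn_mk]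
    push_cast
    ring_nf
  -- RHS
  have hR : borweinA q + 2 * borweinB q =
      ∑' p : ℤ × ℤ, (f p + 2 * (Real.cos (2 * π * ((p.2 : ℝ) - (p.1 : ℝ)) / 3) * f p)) := by
    unfold borweinA borweinB
    rw [← tsum_mul_left, ← Summable.tsum_add hf (hfc.mul_left 2)]
  have hkey : ∀ p : ℤ × ℤ,
      f p + 2 * (Real.cos (2 * π * ((p.2 : ℝ) - (p.1 : ℝ)) / 3) * f p)
        = 3 * borweinS3.indicator f p := by
    intro p
    have hcast : ((p.2 : ℝ) - (p.1 : ℝ)) = ((p.2 - p.1 : ℤ) : ℝ) := by push_cast; ring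
    rw [hcast, borwein_cos_val]
    by_cases h : (3:ℤ) ∣ p.2 - p.1
    · rw [if_pos h, Set.indicator_of_mem (by exact h : p ∈ borweinS3)]
      ring
    · rw [if_neg h, Set.indicator_of_notMem (by exact h : p ∉ borweinS3)]
      ring
  rw [hL, hR]
  calc 3 * ∑' s : borweinS3, f s
      = 3 * ∑' p : ℤ × ℤ, borweinS3.indicator f p := by rw [tsum_subtype]
    _ = ∑' p : ℤ × ℤ, 3 * borweinS3.indicator f p := by rw [tsum_mul_left]
    _ = _ := by exact tsum_congr fun p => (hkey p).symm
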